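/- arXiv:1402.2970 — 9 statements merged into one kernel-verified Lean document; each statement's English description precedes it below -/
import Mathlib

section
/- In the project salary model of the centralized coalition formation game, if there exists at least one feasible coalition, then there exists a Strong Nash Equilibrium of the bidding game; moreover, in every Strong Nash Equilibrium the set of agents receiving positive payoffs equals the set of agents forming the cheapest feasible coalition. -/
open Classical Finset

/-!
Raising salaries by amounts supported on a coalition `W'` raises the cost of any other coalition
by at most the raise of `W'`, so a winner can only be displaced by a coalition that raised its
own salaries. Hence, with `W₀` the cheapest feasible coalition at the minimal salaries `m`, the
profile in which `W₀` asks as much as it can while still winning, everybody else asking `m`, is a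
Strong Nash Equilibrium. Conversely, if `W₀` does not win at `s`, let everybody outside the
current winner drop to `m`: some coalition `W'` not contained in the current winner then wins,
and its members outside the current winner profit by dropping to `m` (when nobody wins at `s`,
`W₀` itself does this).
-/
namespace ProjectSalary

variable {α : Type*}

theorem sum_add_sum_le_of_le_of_eq_off {s s' : α → ℕ} {A B : Finset α} (hle : s ≤ s')
    (hoff : ∀ i ∉ B, s' i = s i) :
    ∑ i ∈ A, s' i + ∑ i ∈ B, s i ≤ ∑ i ∈ B, s' i + ∑ i ∈ A, s i := by
  set δ : α → ℕ := fun i => s' i - s i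
  have hsplit (C : Finset α) : ∑ i ∈ C, s' i = ∑ i ∈ C, s i + ∑ i ∈ C, δ i := by
    rw [← sum_add_distrib]
    exact sum_congr rfl fun i _ => (add_tsub_cancel_of_le (hle i)).symm
  have hδ : ∑ i ∈ A, δ i ≤ ∑ i ∈ B, δ i :=
    calc ∑ i ∈ A, δ i = ∑ i ∈ A ∩ B, δ i :=
          (sum_subset inter_subset_left fun i hiA hi => by
            simp [δ, hoff i fun hiB => hi (mem_inter.2 ⟨hiA, hiB⟩)]).symm
      _ ≤ ∑ i ∈ B, δ i := sum_le_sum_of_subset inter_subset_right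
  rw [hsplit A, hsplit B]
  omega

section CostOrder

variable (prec : Finset α → Finset α → Prop)

def CostLT (s : α → ℕ) (A B : Finset α) : Prop :=
  ∑ i ∈ A, s i < ∑ i ∈ B, s i ∨ (∑ i ∈ A, s i = ∑ i ∈ B, s i ∧ prec A B)

variable {prec}

instance CostLT.isStrictTotalOrder [IsStrictTotalOrder (Finset α) prec] (s : α → ℕ) :
    IsStrictTotalOrder (Finset α) (CostLT prec s) where
  trichotomous A B hAB hBA := by
    simp only [CostLT, not_or, not_and] at hAB hBA
    have hsum : ∑ i ∈ A, s i = ∑ i ∈ B, s i := by omega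
    exact Std.Trichotomous.trichotomous A B (hAB.2 hsum) (hBA.2 hsum.symm)
  irrefl A h := by
    rcases h with h | ⟨-, h⟩
    exacts [lt_irrefl _ h, irrefl A h]
  trans A B C hAB hBC := by
    rcases hAB with hAB | ⟨hAB, pAB⟩ <;> rcases hBC with hBC | ⟨hBC, pBC⟩
    · exact Or.inl (hAB.trans hBC)
    · exact Or.inl (hBC ▸ hAB)
    · exact Or.inl (hAB ▸ hBC)
    · exact Or.inr ⟨hAB.trans hBC, _root_.trans pAB pBC⟩

theorem CostLT.sum_le {s : α → ℕ} {A B : Finset α} (h : CostLT prec s A B) :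
    ∑ i ∈ A, s i ≤ ∑ i ∈ B, s i := by
  rcases h with h | ⟨h, -⟩
  exacts [h.le, h.le]

theorem CostLT.mono {s s' : α → ℕ} {A B : Finset α}
    (h : ∑ i ∈ A, s' i + ∑ i ∈ B, s i ≤ ∑ i ∈ B, s' i + ∑ i ∈ A, s i)
    (hAB : CostLT prec s A B) : CostLT prec s' A B := by
  rcases hAB with hAB | ⟨hAB, pAB⟩
  · exact Or.inl (by omega)
  · rcases Nat.lt_or_eq_of_le (show ∑ i ∈ A, s' i ≤ ∑ i ∈ B, s' i by omega) with h' | h'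
    exacts [Or.inl h', Or.inr ⟨h', pAB⟩]

end CostOrder

section Winner

variable (F : Finset α → Prop) (prec : Finset α → Finset α → Prop) (v : ℕ)

def IsWinner (s : α → ℕ) (W : Finset α) : Prop :=
  (F W ∧ ∑ i ∈ W, s i ≤ v) ∧ ∀ A, A ≠ W → F A → ∑ i ∈ A, s i ≤ v → CostLT prec s W A

noncomputable def payoff (s : α → ℕ) (i : α) : ℕ :=
  if ∃ W, IsWinner F prec v s W ∧ i ∈ W then s i else 0

variable {F prec v} {s t : α → ℕ} {W W' : Finset α}

theorem IsWinner.of_le (hW : IsWinner F prec v t W) (hle : t ≤ s) (heq : ∀ i ∈ W, s i = t i) :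
    IsWinner F prec v s W := by
  have hWsum : ∑ i ∈ W, s i = ∑ i ∈ W, t i := sum_congr rfl heq
  refine ⟨⟨hW.1.1, hWsum ▸ hW.1.2⟩, fun A hA hFA hAv => ?_⟩
  have htA : ∑ i ∈ A, t i ≤ ∑ i ∈ A, s i := sum_le_sum fun i _ => hle i
  exact (hW.2 A hA hFA (htA.trans hAv)).mono (by omega)

theorem exists_isWinner_of_payoff_pos {i : α} (h : 0 < payoff F prec v s i) :
    ∃ W, IsWinner F prec v s W ∧ i ∈ W := by
  by_contra hno
  rw [payoff, if_neg hno] at h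
  exact lt_irrefl 0 h

variable [IsStrictTotalOrder (Finset α) prec]

theorem IsWinner.unique (hW : IsWinner F prec v s W) (hW' : IsWinner F prec v s W') : W = W' := by
  by_contra hne
  exact asymm (hW.2 W' (Ne.symm hne) hW'.1.1 hW'.1.2) (hW'.2 W hne hW.1.1 hW.1.2)

theorem exists_isWinner [Finite α] (hfeas : ∃ A, F A ∧ ∑ i ∈ A, s i ≤ v) :
    ∃ W, IsWinner F prec v s W := by
  obtain ⟨W, hW, hmin⟩ :=
    (Finite.wellFounded_of_trans_of_irrefl (CostLT prec s)).has_min {A | F A ∧ ∑ i ∈ A, s i ≤ v}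
      hfeas
  refine ⟨W, hW, fun A hA hFA hAv => ?_⟩
  by_contra hWA
  exact hA (Std.Trichotomous.trichotomous W A hWA (hmin A ⟨hFA, hAv⟩)).symm

theorem IsWinner.eq_of_le (hW : IsWinner F prec v t W) (hW' : IsWinner F prec v s W')
    (hle : t ≤ s) (hoff : ∀ i ∉ W', s i = t i) : W' = W := by
  by_contra hne
  have hW'v : ∑ i ∈ W', t i ≤ v := (sum_le_sum fun i _ => hle i).trans hW'.1.2
  have hlt : CostLT prec s W W' :=
    (hW.2 W' hne hW'.1.1 hW'v).mono (sum_add_sum_le_of_le_of_eq_off hle hoff)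
  exact asymm hlt (hW'.2 W (Ne.symm hne) hW.1.1 (hlt.sum_le.trans hW'.1.2))

theorem payoff_eq_of_isWinner (hW : IsWinner F prec v s W) (i : α) :
    payoff F prec v s i = if i ∈ W then s i else 0 := by
  by_cases hi : i ∈ W
  · rw [payoff, if_pos ⟨W, hW, hi⟩, if_pos hi]
  · rw [payoff, if_neg, if_neg hi]
    rintro ⟨W', hW', hiW'⟩
    exact hi (hW'.unique hW ▸ hiW')

end Winner

def IsStrongNash {σ β : Type*} [LT β] (valid : (α → σ) → Prop) (payoff : (α → σ) → α → β)
    (s : α → σ) : Prop :=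
  valid s ∧ ¬ ∃ (D : Finset α) (s' : α → σ), D.Nonempty ∧ valid s' ∧ (∀ i ∉ D, s' i = s i) ∧
    ∀ i ∈ D, payoff s i < payoff s' i

section Equilibrium

variable {F : Finset α → Prop} {prec : Finset α → Finset α → Prop} {v : ℕ}
  [IsStrictTotalOrder (Finset α) prec] {m s : α → ℕ} {W₀ : Finset α}

theorem exists_isStrongNash [Finite α] (hW₀ : IsWinner F prec v m W₀) :
    ∃ s, IsStrongNash (m ≤ ·) (payoff F prec v) s := by
  let Raised : (α → ℕ) → Prop := fun s =>
    m ≤ s ∧ (∀ i ∉ W₀, s i = m i) ∧ IsWinner F prec v s W₀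
  obtain ⟨_, ⟨s₀, ⟨hm₀, hoff₀, hwin₀⟩, rfl⟩, hmax⟩ :=
    BddAbove.exists_isGreatest_of_nonempty (S := (fun s => ∑ i ∈ W₀, s i) '' {s | Raised s})
      ⟨v, by rintro _ ⟨s, hs, rfl⟩; exact hs.2.2.1.2⟩ ⟨_, m, ⟨le_rfl, fun _ _ => rfl, hW₀⟩, rfl⟩
  refine ⟨s₀, hm₀, ?_⟩
  rintro ⟨D, s', ⟨i₀, hi₀⟩, hm', hout, hgain⟩
  have hwinD : ∀ i ∈ D, ∃ W, IsWinner F prec v s' W ∧ i ∈ W := fun i hi =>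
    exists_isWinner_of_payoff_pos ((Nat.zero_le _).trans_lt (hgain i hi))
  obtain ⟨W', hW', -⟩ := hwinD i₀ hi₀
  have hDW' : D ⊆ W' := fun i hi => by
    obtain ⟨W, hW, hiW⟩ := hwinD i hi
    exact hW.unique hW' ▸ hiW
  have hgain' : ∀ i ∈ D, payoff F prec v s₀ i < s' i := fun i hi => by
    simpa [payoff_eq_of_isWinner hW', hDW' hi] using hgain i hi
  have hle : s₀ ≤ s' := fun i => by
    by_cases hiD : i ∈ D
    · by_cases hiW₀ : i ∈ W₀
      · simpa [payoff_eq_of_isWinner hwin₀, hiW₀] using (hgain' i hiD).le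
      · exact (hoff₀ i hiW₀).trans_le (hm' i)
    · exact (hout i hiD).ge
  have hout' : ∀ i ∉ W', s' i = s₀ i := fun i hi => hout i fun hiD => hi (hDW' hiD)
  obtain rfl : W' = W₀ := hwin₀.eq_of_le hW' hle hout'
  have hsum_le : ∑ i ∈ W', s' i ≤ ∑ i ∈ W', s₀ i :=
    hmax ⟨s', ⟨hm', fun i hi => (hout' i hi).trans (hoff₀ i hi), hW'⟩, rfl⟩
  have hsum_lt : ∑ i ∈ W', s₀ i < ∑ i ∈ W', s' i :=
    sum_lt_sum (fun i _ => hle i)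
      ⟨i₀, hDW' hi₀, by simpa [payoff_eq_of_isWinner hwin₀, hDW' hi₀] using hgain' i₀ hi₀⟩
  omega

theorem not_isStrongNash_of_isWinner_piecewise (hm : ∀ i, 0 < m i) {D W : Finset α}
    (hD : D.Nonempty) (hDW : D ⊆ W) (hpay : ∀ i ∈ D, payoff F prec v s i = 0)
    (hW : IsWinner F prec v (D.piecewise m s) W) :
    ¬ IsStrongNash (m ≤ ·) (payoff F prec v) s := by
  rintro ⟨hs, hdev⟩
  refine hdev ⟨D, D.piecewise m s, hD, D.le_piecewise_of_le_of_le le_rfl hs,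
    fun i hi => piecewise_eq_of_notMem _ _ _ hi, fun i hi => ?_⟩
  rw [hpay i hi, payoff_eq_of_isWinner hW, if_pos (hDW hi), piecewise_eq_of_mem _ _ _ hi]
  exact hm i

theorem not_isStrongNash_of_forall_not_isWinner (hm : ∀ i, 0 < m i)
    (hW₀ : IsWinner F prec v m W₀) (hnone : ∀ W, ¬ IsWinner F prec v s W) :
    ¬ IsStrongNash (m ≤ ·) (payoff F prec v) s := by
  intro hSNE
  have hs : m ≤ s := hSNE.1
  have hW₀ne : W₀.Nonempty := by
    rw [nonempty_iff_ne_empty]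
    rintro rfl
    exact hnone ∅ (hW₀.of_le hs (by simp))
  have hW₀win : IsWinner F prec v (W₀.piecewise m s) W₀ :=
    hW₀.of_le (W₀.le_piecewise_of_le_of_le le_rfl hs) fun i hi => piecewise_eq_of_mem _ _ _ hi
  refine not_isStrongNash_of_isWinner_piecewise hm hW₀ne subset_rfl (fun i _ => ?_) hW₀win hSNE
  rw [payoff, if_neg fun ⟨W, hW, _⟩ => hnone W hW]

theorem not_isStrongNash_of_isWinner_ne [Finite α] (hm : ∀ i, 0 < m i)
    (hW₀ : IsWinner F prec v m W₀) {Ws : Finset α} (hWs : IsWinner F prec v s Ws)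
    (hne : Ws ≠ W₀) : ¬ IsStrongNash (m ≤ ·) (payoff F prec v) s := by
  intro hSNE
  have hs : m ≤ s := hSNE.1
  set t := Ws.piecewise s m
  have hmt : m ≤ t := Ws.le_piecewise_of_le_of_le hs le_rfl
  have hts : t ≤ s := Ws.piecewise_le_of_le_of_le le_rfl hs
  have htWs : ∑ i ∈ Ws, t i = ∑ i ∈ Ws, s i :=
    sum_congr rfl fun i hi => piecewise_eq_of_mem _ _ _ hi
  obtain ⟨W', hW'⟩ : ∃ W', IsWinner F prec v t W' :=
    exists_isWinner ⟨Ws, hWs.1.1, htWs.trans_le hWs.1.2⟩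
  have hD : (W' \ Ws).Nonempty := by
    refine sdiff_nonempty.2 fun hsub => hne ?_
    have hW's : W' = Ws :=
      (hW'.of_le hts fun i hi => (piecewise_eq_of_mem _ _ _ (hsub hi)).symm).unique hWs
    exact hW₀.eq_of_le (hW's ▸ hW') hmt fun i hi => piecewise_eq_of_notMem _ _ _ hi
  refine not_isStrongNash_of_isWinner_piecewise hm hD sdiff_subset (fun i hi => ?_)
    (hW'.of_le (fun i => ?_) fun i hi => ?_) hSNE
  · rw [payoff_eq_of_isWinner hWs, if_neg (mem_sdiff.1 hi).2]
  · by_cases hiWs : i ∈ Ws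
    · simp [t, Finset.piecewise, hiWs]
    · by_cases hiW' : i ∈ W' <;> simp [t, Finset.piecewise, hiWs, hiW', hs i]
  · by_cases hiWs : i ∈ Ws <;> simp [t, Finset.piecewise, hiWs, hi]

theorem isWinner_of_isStrongNash [Finite α] (hm : ∀ i, 0 < m i) (hW₀ : IsWinner F prec v m W₀)
    (hs : IsStrongNash (m ≤ ·) (payoff F prec v) s) : IsWinner F prec v s W₀ := by
  by_cases hex : ∃ W, IsWinner F prec v s W
  · obtain ⟨Ws, hWs⟩ := hex
    by_contra hne
    exact not_isStrongNash_of_isWinner_ne hm hW₀ hWs (fun h => hne (h ▸ hWs)) hs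
  · exact absurd hs (not_isStrongNash_of_forall_not_isWinner hm hW₀ fun W hW => hex ⟨W, hW⟩)

end Equilibrium

end ProjectSalary

open ProjectSalary in
/-- Centralized coalition formation game, project salary model: if a feasible coalition
exists then a Strong Nash Equilibrium exists, and in every SNE the agents with positive
payoffs are exactly the members of the cheapest feasible coalition (the winner under the
minimal-salary profile). -/
theorem stmt0
    {α : Type} [Fintype α] [DecidableEq α]
    (m : α → ℕ) (hm : ∀ i, 0 < m i) (v : ℕ)
    (F : Finset α → Prop)
    (prec : Finset α → Finset α → Prop)
    (hprec : IsStrictTotalOrder (Finset α) prec)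
    (winner : (α → ℕ) → Finset α → Prop)
    (hwinner : ∀ s W, winner s W ↔
      (F W ∧ ∑ i ∈ W, s i ≤ v) ∧
      ∀ A, A ≠ W → F A → ∑ i ∈ A, s i ≤ v →
        (∑ i ∈ W, s i < ∑ i ∈ A, s i ∨
         (∑ i ∈ W, s i = ∑ i ∈ A, s i ∧ prec W A)))
    (payoff : (α → ℕ) → α → ℕ)
    (hpayoff : ∀ s i, payoff s i = if ∃ W, winner s W ∧ i ∈ W then s i else 0)
    (valid : (α → ℕ) → Prop)
    (hvalid : ∀ s, valid s ↔ ∀ i, m i ≤ s i)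
    (SNE : (α → ℕ) → Prop)
    (hSNE : ∀ s, SNE s ↔ valid s ∧ ¬ ∃ (D : Finset α) (s' : α → ℕ),
      D.Nonempty ∧ valid s' ∧ (∀ i ∉ D, s' i = s i) ∧
      ∀ i ∈ D, payoff s i < payoff s' i)
    (hfeas : ∃ S : Finset α, F S ∧ ∑ i ∈ S, m i ≤ v) :
    (∃ s, SNE s) ∧
    ∀ s, SNE s → ∀ W, winner m W → ∀ i, (0 < payoff s i ↔ i ∈ W) := by
  obtain rfl : winner = IsWinner F prec v := funext₂ fun s W => propext (hwinner s W)
  obtain rfl : payoff = ProjectSalary.payoff F prec v := funext₂ fun s i => by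
    rw [hpayoff, ProjectSalary.payoff]; congr
  obtain rfl : valid = (m ≤ ·) := funext fun s => propext (hvalid s)
  obtain rfl : SNE = IsStrongNash (m ≤ ·) (ProjectSalary.payoff F prec v) :=
    funext fun s => propext (hSNE s)
  obtain ⟨W₀, hW₀⟩ : ∃ W₀, IsWinner F prec v m W₀ := exists_isWinner hfeas
  refine ⟨exists_isStrongNash hW₀, fun s hs W hW i => ?_⟩
  obtain rfl := hW.unique hW₀
  rw [payoff_eq_of_isWinner (isWinner_of_isStrongNash hm hW hs)]
  split_ifs with hi
  · exact iff_of_true ((hm i).trans_le (hs.1 i)) hi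
  · exact iff_of_false (lt_irrefl 0) hi
end

section
/- In the hourly salary model of the centralized coalition formation game, a Strong Nash Equilibrium may fail to exist even though a feasible coalition exists. Concretely: with budget v = 49, three agents a, b, c with minimal hourly salaries all equal to 1, where the feasible two-agent coalitions require working times (t_a, t_b) = (10, 10), (t_a, t_c) = (22, 2), and (t_b, t_c) = (2, 38), the resulting bidding game (agent payoff = hourly salary if in the cheapest feasible coalition, coalition cost = ∑ t_i · s_i, cost must not exceed v) has no Strong Nash Equilibrium. -/
open Classical Finset

/-!
Every valid bid profile `s = (a, b, c)` admits a profitable joint deviation to a profile under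
which the deviators' coalition is strictly cheapest and feasible. An agent left out of the chosen
coalition earns nothing, so she can bid 1: if `{b, c}` is chosen then `{a, b}` or `{a, c}` becomes
cheapest, and if `{a, c}` is chosen then `{a, b}` does. If `{a, b}` is chosen then `a + b ≤ 4`:
for `a ≥ 2`, `b` and `c` bid `(3, 1)` and `{b, c}` wins; for `a = 1, b ≤ 2`, `a` raises to 2 and
`{a, b}` still wins; for `(a, b) = (1, 3)`, `a` and `c` bid `(2, 2)` and `{a, c}` wins. If no
coalition is feasible, `a` and `b` bid 1.
-/

section
variable {ι K : Type*}

def IsCheapestFeasible (cost : K → (ι → ℕ) → ℕ) (v : ℕ) (tie : K → K → Prop)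
    (s : ι → ℕ) (k : K) : Prop :=
  cost k s ≤ v ∧ ∀ k', k' ≠ k → cost k' s ≤ v →
    (cost k s < cost k' s ∨ (cost k s = cost k' s ∧ tie k k'))

noncomputable def salaryPayoff (cost : K → (ι → ℕ) → ℕ) (v : ℕ) (tie : K → K → Prop)
    (members : K → Finset ι) (s : ι → ℕ) (i : ι) : ℕ :=
  if ∃ k, IsCheapestFeasible cost v tie s k ∧ i ∈ members k then s i else 0

def IsStrongNash (valid : (ι → ℕ) → Prop) (u : (ι → ℕ) → ι → ℕ) (s : ι → ℕ) : Prop :=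
  valid s ∧ ¬ ∃ (D : Finset ι) (s' : ι → ℕ),
    D.Nonempty ∧ valid s' ∧ (∀ i ∉ D, s' i = s i) ∧ ∀ i ∈ D, u s i < u s' i

variable {cost : K → (ι → ℕ) → ℕ} {v : ℕ} {tie : K → K → Prop} {members : K → Finset ι}
  {s : ι → ℕ}

theorem IsCheapestFeasible.of_forall_lt {k : K} (hk : cost k s ≤ v)
    (hlt : ∀ k', k' ≠ k → cost k s < cost k' s) : IsCheapestFeasible cost v tie s k :=
  ⟨hk, fun k' hk' _ => Or.inl (hlt k' hk')⟩

theorem IsCheapestFeasible.unique [Std.Asymm tie] {k k' : K}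
    (hk : IsCheapestFeasible cost v tie s k) (hk' : IsCheapestFeasible cost v tie s k') :
    k = k' := by
  by_contra hne
  rcases hk.2 k' (Ne.symm hne) hk'.1 with h | ⟨h, ht⟩ <;>
    rcases hk'.2 k hne hk.1 with h' | ⟨h', ht'⟩
  · omega
  · omega
  · omega
  · exact Std.Asymm.asymm _ _ ht ht'

theorem salaryPayoff_of_mem {k : K} {i : ι} (hk : IsCheapestFeasible cost v tie s k)
    (hi : i ∈ members k) : salaryPayoff cost v tie members s i = s i :=
  if_pos ⟨k, hk, hi⟩

theorem salaryPayoff_of_not_mem [Std.Asymm tie] {k : K} {i : ι}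
    (hk : IsCheapestFeasible cost v tie s k) (hi : i ∉ members k) :
    salaryPayoff cost v tie members s i = 0 :=
  if_neg fun ⟨_, hk', hi'⟩ => hi (hk.unique hk' ▸ hi')

theorem salaryPayoff_of_forall_not {i : ι} (h : ∀ k, ¬ IsCheapestFeasible cost v tie s k) :
    salaryPayoff cost v tie members s i = 0 :=
  if_neg fun ⟨k, hk, _⟩ => h k hk

theorem not_isStrongNash_of_deviation {valid : (ι → ℕ) → Prop} {s' : ι → ℕ} {D : Finset ι}
    {k : K} (hD : D.Nonempty) (hs' : valid s') (hoff : ∀ i ∉ D, s' i = s i)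
    (hk : IsCheapestFeasible cost v tie s' k) (hDk : D ⊆ members k)
    (hgain : ∀ i ∈ D, salaryPayoff cost v tie members s i < s' i) :
    ¬ IsStrongNash valid (salaryPayoff cost v tie members) s := fun h =>
  h.2 ⟨D, s', hD, hs', hoff, fun i hi => salaryPayoff_of_mem hk (hDk hi) ▸ hgain i hi⟩

end

-- Coalition `k` consists of the two agents other than `k`.
def threeAgentCost : Fin 3 → (Fin 3 → ℕ) → ℕ :=
  ![fun s => 2 * s 1 + 38 * s 2, fun s => 22 * s 0 + 2 * s 2, fun s => 10 * s 0 + 10 * s 1]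

section ThreeAgents

variable (tie : Fin 3 → Fin 3 → Prop)

theorem threeAgent_not_isStrongNash_of_deviation {s : Fin 3 → ℕ} (D : Finset (Fin 3))
    (s' : Fin 3 → ℕ) (k : Fin 3) (hD : D.Nonempty) (hs' : ∀ i, 1 ≤ s' i)
    (hoff : ∀ i ∉ D, s' i = s i) (hkD : k ∉ D) (hk : threeAgentCost k s' ≤ 49)
    (hlt : ∀ k', k' ≠ k → threeAgentCost k s' < threeAgentCost k' s')
    (hgain : ∀ i ∈ D, salaryPayoff threeAgentCost 49 tie (univ.erase ·) s i < s' i) :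
    ¬ IsStrongNash (fun s => ∀ i, 1 ≤ s i) (salaryPayoff threeAgentCost 49 tie (univ.erase ·)) s :=
  not_isStrongNash_of_deviation hD hs' hoff (.of_forall_lt hk hlt)
    (fun i hi => mem_erase.2 ⟨ne_of_mem_of_not_mem hi hkD, mem_univ i⟩) hgain

theorem threeAgent_not_isStrongNash [Std.Asymm tie] (s : Fin 3 → ℕ) :
    ¬ IsStrongNash (fun s => ∀ i, 1 ≤ s i)
      (salaryPayoff threeAgentCost 49 tie (univ.erase ·)) s := by
  intro hSNE
  obtain ⟨hs0, hs1, hs2⟩ : 1 ≤ s 0 ∧ 1 ≤ s 1 ∧ 1 ≤ s 2 := ⟨hSNE.1 0, hSNE.1 1, hSNE.1 2⟩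
  revert hSNE
  by_cases hchosen : ∃ k, IsCheapestFeasible threeAgentCost 49 tie s k
  swap
  · have hzero := fun i => salaryPayoff_of_forall_not (members := (univ.erase ·)) (i := i)
      (not_exists.1 hchosen)
    apply threeAgent_not_isStrongNash_of_deviation tie {0, 1} ![1, 1, s 2] 2 <;>
      simp_all [Fin.forall_fin_succ, threeAgentCost]
    omega
  obtain ⟨k, hk⟩ := hchosen
  have hk0 := salaryPayoff_of_not_mem (members := (univ.erase ·)) (i := k) hk (by simp)
  have hfeas := hk.1
  fin_cases k
  · by_cases hb : s 1 = 1
    · apply threeAgent_not_isStrongNash_of_deviation tie {0} ![1, s 1, s 2] 2 <;>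
        simp_all [Fin.forall_fin_succ, threeAgentCost]
      omega
    · apply threeAgent_not_isStrongNash_of_deviation tie {0} ![1, s 1, s 2] 1 <;>
        simp_all [Fin.forall_fin_succ, threeAgentCost] <;> omega
  · apply threeAgent_not_isStrongNash_of_deviation tie {1} ![s 0, 1, s 2] 2 <;>
      simp_all [Fin.forall_fin_succ, threeAgentCost] <;> omega
  · have hpaid := fun i => salaryPayoff_of_mem (members := (univ.erase ·)) (i := i) hk
    obtain ha | ⟨ha, hb⟩ | ⟨ha, hb⟩ : 2 ≤ s 0 ∨ (s 0 = 1 ∧ s 1 ≤ 2) ∨ (s 0 = 1 ∧ s 1 = 3) := by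
      simp [threeAgentCost] at hfeas
      omega
    · apply threeAgent_not_isStrongNash_of_deviation tie {1, 2} ![s 0, 3, 1] 0 <;>
        simp_all [Fin.forall_fin_succ, threeAgentCost] <;> omega
    · apply threeAgent_not_isStrongNash_of_deviation tie {0} ![2, s 1, s 2] 2 <;>
        simp_all [Fin.forall_fin_succ, threeAgentCost] <;> omega
    · apply threeAgent_not_isStrongNash_of_deviation tie {0, 2} ![2, 3, 2] 1 <;>
        simp_all [Fin.forall_fin_succ, threeAgentCost]

end ThreeAgents

/-- Hourly salary model, centralized game: in the concrete 3-agent instance with budget 49,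
minimal hourly salaries 1, and two-agent coalitions with working times (10,10), (22,2), (2,38),
a feasible coalition exists but no Strong Nash Equilibrium exists (for any deterministic
tie-breaking rule). Agents: a = 0, b = 1, c = 2; coalition indexed by its non-member. -/
theorem stmt1
    (tie : Fin 3 → Fin 3 → Prop) (htie : IsStrictTotalOrder (Fin 3) tie)
    (cost : Fin 3 → (Fin 3 → ℕ) → ℕ)
    (hcost : ∀ s : Fin 3 → ℕ,
      cost 2 s = 10 * s 0 + 10 * s 1 ∧
      cost 1 s = 22 * s 0 + 2 * s 2 ∧
      cost 0 s = 2 * s 1 + 38 * s 2)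
    (wins : (Fin 3 → ℕ) → Fin 3 → Prop)
    (hwins : ∀ s k, wins s k ↔ cost k s ≤ 49 ∧ ∀ k', k' ≠ k → cost k' s ≤ 49 →
      (cost k s < cost k' s ∨ (cost k s = cost k' s ∧ tie k k')))
    (payoff : (Fin 3 → ℕ) → Fin 3 → ℕ)
    (hpayoff : ∀ s i, payoff s i =
      if ∃ k, wins s k ∧ i ∈ Finset.univ.erase k then s i else 0)
    (valid : (Fin 3 → ℕ) → Prop)
    (hvalid : ∀ s, valid s ↔ ∀ i, 1 ≤ s i)
    (SNE : (Fin 3 → ℕ) → Prop)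
    (hSNE : ∀ s, SNE s ↔ valid s ∧ ¬ ∃ (D : Finset (Fin 3)) (s' : Fin 3 → ℕ),
      D.Nonempty ∧ valid s' ∧ (∀ i ∉ D, s' i = s i) ∧
      ∀ i ∈ D, payoff s i < payoff s' i) :
    (∃ (s : Fin 3 → ℕ) (k : Fin 3), valid s ∧ cost k s ≤ 49) ∧ ¬ ∃ s, SNE s := by
  have := htie
  obtain rfl : cost = threeAgentCost := by
    funext k s
    fin_cases k <;> simp [threeAgentCost, hcost]
  obtain rfl : wins = IsCheapestFeasible threeAgentCost 49 tie :=
    funext₂ fun s k => propext (hwins s k)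
  obtain rfl : payoff = salaryPayoff threeAgentCost 49 tie (univ.erase ·) := by
    funext s i
    rw [hpayoff, salaryPayoff]
    congr
  obtain rfl : valid = fun s => ∀ i, 1 ≤ s i := funext fun s => propext (hvalid s)
  obtain rfl : SNE = IsStrongNash _ (salaryPayoff threeAgentCost 49 tie (univ.erase ·)) :=
    funext fun s => propext (hSNE s)
  exact ⟨⟨1, 2, fun _ => le_rfl, by decide⟩, fun ⟨s, hs⟩ => threeAgent_not_isStrongNash tie s hs⟩
end

section
/- There exists an instance (in both the project salary and hourly salary models) in which a feasible coalition exists but no strongly winning coalition exists. Concretely: with budget v = 5, three identical agents a, b, c each with minimal salary 2 (integer salaries), where exactly the two-agent coalitions are able to complete the project, no coalition is strongly winning. -/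
open Finset

/-- A coalition: a set of member agents, a salary function, and a total cost (bid). -/
structure Coal (α : Type) where
  mem : Finset α
  sal : α → ℕ
  cost : ℕ

namespace Coal

variable {α : Type} [DecidableEq α]

/-- `C` is cheaper than `C'`: strictly lower cost, or equal cost and preferred by the
tie-breaking order `prec` on agent sets. -/
def cheaper (prec : Finset α → Finset α → Prop) (C C' : Coal α) : Prop :=
  C.cost < C'.cost ∨ (C.cost = C'.cost ∧ prec C.mem C'.mem)

/-- `C` is explicitly endangered by `C'`: `C'` is feasible, disjoint from `C`, and cheaper. -/
def explEnd (Feas : Coal α → Prop) (prec : Finset α → Finset α → Prop)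
    (C C' : Coal α) : Prop :=
  Feas C' ∧ C.mem ∩ C'.mem = ∅ ∧ cheaper prec C' C

/-- `C` is implicitly endangered by `C'`: `C'` is feasible, overlaps `C`, every shared
agent gets in `C'` at least as good a salary as in `C`, and `C'` differs from `C`
(in member set or salaries of members). -/
def implEnd (Feas : Coal α → Prop) (C C' : Coal α) : Prop :=
  Feas C' ∧ (C.mem ∩ C'.mem).Nonempty ∧
    (∀ i ∈ C.mem ∩ C'.mem, C.sal i ≤ C'.sal i) ∧
    ¬ (C.mem = C'.mem ∧ ∀ i ∈ C.mem, C.sal i = C'.sal i)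

/-- `C` is strictly implicitly endangered by `C'`: as implicit endangerment but every
shared agent gets a strictly better salary in `C'`. -/
def strictImplEnd (Feas : Coal α → Prop) (C C' : Coal α) : Prop :=
  Feas C' ∧ (C.mem ∩ C'.mem).Nonempty ∧
    ∀ i ∈ C.mem ∩ C'.mem, C.sal i < C'.sal i

/-- All members of `C` unanimously propose `C` in the profile `π`. -/
def unan (π : α → Coal α) (C : Coal α) : Prop := ∀ j ∈ C.mem, π j = C

open Classical in
/-- Payoff of agent `i` in the decentralized game: her salary in her proposed coalition if
that coalition is feasible, unanimously proposed, contains her, and no cheaper feasible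
unanimously proposed coalition exists; otherwise 0. -/
noncomputable def payoff (Feas : Coal α → Prop) (prec : Finset α → Finset α → Prop)
    (π : α → Coal α) (i : α) : ℕ :=
  if i ∈ (π i).mem ∧ Feas (π i) ∧ unan π (π i) ∧
      ¬ ∃ C', Feas C' ∧ unan π C' ∧ cheaper prec C' (π i)
  then (π i).sal i else 0

/-- Rigorously Strong Nash Equilibrium: no subset of agents can jointly deviate so that
every deviating agent's payoff is at least her current one and some agent's payoff changes. -/
def RSNE (Feas : Coal α → Prop) (prec : Finset α → Finset α → Prop)
    (π : α → Coal α) : Prop :=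
  ¬ ∃ (D : Finset α) (π' : α → Coal α),
    (∀ i ∉ D, π' i = π i) ∧
    (∀ i ∈ D, payoff Feas prec π i ≤ payoff Feas prec π' i) ∧
    ∃ j, payoff Feas prec π' j ≠ payoff Feas prec π j

/-- `C` is rigorously strongly winning: some RSNE gives the members of `C` the positive
payoffs `C.sal`. -/
def RSWinning (Feas : Coal α → Prop) (prec : Finset α → Finset α → Prop)
    (C : Coal α) : Prop :=
  ∃ π, RSNE Feas prec π ∧ ∀ i ∈ C.mem, payoff Feas prec π i = C.sal i ∧ 0 < C.sal i

/-- Project salary model feasibility: the member set can complete the project, salaries are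
at least minimal, the cost is the sum of members' salaries, and the budget is respected. -/
def feasPS (Fset : Finset α → Prop) (m : α → ℕ) (v : ℕ) (C : Coal α) : Prop :=
  Fset C.mem ∧ (∀ i ∈ C.mem, m i ≤ C.sal i) ∧
    C.cost = ∑ i ∈ C.mem, C.sal i ∧ C.cost ≤ v

/-- Weakly winning coalition: feasible, not explicitly endangered, and every implicitly
endangering feasible coalition is itself explicitly or implicitly endangered. -/
def weaklyWinning (Feas : Coal α → Prop) (prec : Finset α → Finset α → Prop)
    (C : Coal α) : Prop :=
  Feas C ∧ (¬ ∃ C', explEnd Feas prec C C') ∧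
    ∀ C', implEnd Feas C C' → ∃ C'', explEnd Feas prec C' C'' ∨ implEnd Feas C' C''

end Coal

/-- Feasibility in the concrete instance: budget v = 5, three identical agents (Fin 3) with
minimal salary 2; exactly the two-agent coalitions can complete the project; integer
salaries; cost is the sum of members' salaries. -/
def feas7 (C : Coal (Fin 3)) : Prop :=
  C.mem.card = 2 ∧ (∀ i ∈ C.mem, 2 ≤ C.sal i) ∧
    C.cost = ∑ i ∈ C.mem, C.sal i ∧ C.cost ≤ 5

namespace Coal

variable {α : Type} [DecidableEq α]

def pair (i j : α) (si sj : ℕ) : Coal α :=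
  ⟨{i, j}, fun x => if x = i then si else sj, si + sj⟩

theorem strictImplEnd_of_inter_eq_singleton {Feas : Coal α → Prop} {C C' : Coal α} {i : α}
    (hC' : Feas C') (hinter : C.mem ∩ C'.mem = {i}) (hlt : C.sal i < C'.sal i) :
    strictImplEnd Feas C C' :=
  ⟨hC', hinter ▸ singleton_nonempty i, fun x hx => by
    rw [hinter, mem_singleton] at hx
    exact hx ▸ hlt⟩

end Coal

theorem feas7_pair {i j : Fin 3} (hij : i ≠ j) {si sj : ℕ} (hi : 2 ≤ si) (hj : 2 ≤ sj)
    (hbudget : si + sj ≤ 5) : feas7 (Coal.pair i j si sj) := by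
  refine ⟨card_pair hij, ?_, ?_, hbudget⟩
  · intro x hx
    by_cases h : x = i <;> simp [Coal.pair, h, hi, hj]
  · simp [Coal.pair, sum_pair hij, hij.symm]

theorem feas7.exists_sal_eq_two {C : Coal (Fin 3)} (hC : feas7 C) :
    ∃ i ∈ C.mem, C.sal i = 2 := by
  obtain ⟨hcard, hsal, hcost, hbudget⟩ := hC
  obtain ⟨i, k, hik, hmem⟩ := card_eq_two.mp hcard
  have hi := hsal i (by simp [hmem])
  have hk := hsal k (by simp [hmem])
  rw [hcost, hmem, sum_pair hik] at hbudget
  rcases (by omega : C.sal i = 2 ∨ C.sal k = 2) with h | h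
  · exact ⟨i, by simp [hmem], h⟩
  · exact ⟨k, by simp [hmem], h⟩

/-- The budget 5 forces some member's salary down to the minimum 2; she and the outsider then form
a feasible coalition paying her 3. -/
theorem stmt7_general (prec : Finset (Fin 3) → Finset (Fin 3) → Prop) :
    (∃ C, feas7 C) ∧
    ∀ C, feas7 C →
      ∃ C', Coal.explEnd feas7 prec C C' ∨ Coal.strictImplEnd feas7 C C' := by
  refine ⟨⟨Coal.pair 0 1 2 2, feas7_pair (by decide) le_rfl le_rfl (by norm_num)⟩, ?_⟩
  intro C hC
  obtain ⟨i, hi, hsal⟩ := hC.exists_sal_eq_two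
  obtain ⟨j, -, hj⟩ := exists_mem_notMem_of_card_lt_card (s := C.mem) (t := univ) (by simp [hC.1])
  have hij : i ≠ j := ne_of_mem_of_not_mem hi hj
  have hinter : C.mem ∩ {i, j} = {i} := by
    rw [inter_insert_of_mem hi, inter_singleton_of_notMem hj, insert_empty]
  refine ⟨Coal.pair i j 3 2, Or.inr ?_⟩
  exact Coal.strictImplEnd_of_inter_eq_singleton
    (feas7_pair hij (by norm_num) le_rfl (by norm_num)) hinter (by simp [Coal.pair, hsal])

/-- With budget 5, three identical agents with minimal salary 2, and exactly the two-agent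
coalitions feasible, a feasible coalition exists but every feasible coalition is explicitly
or strictly implicitly endangered — hence no strongly winning coalition exists. -/
theorem stmt7 (prec : Finset (Fin 3) → Finset (Fin 3) → Prop)
    (hprec : IsStrictTotalOrder (Finset (Fin 3)) prec) :
    (∃ C, feas7 C) ∧
    ∀ C, feas7 C →
      ∃ C', Coal.explEnd feas7 prec C C' ∨ Coal.strictImplEnd feas7 C C' :=
  stmt7_general prec
end

section
/- The problem FFCPS (Find Feasible Coalition, Project Salary) is NP-hard even for two agents: the Partition problem reduces to it. Specifically, given integers n_1, …, n_k, construct k tasks, two agents a, b with processing times s_{a,j} = s_{b,j} = n_j, unit costs, unlimited budget, and deadline d = (∑_j n_j)/2; then a feasible assignment of all tasks to the two agents respecting the deadline exists if and only if the multiset {n_j} can be partitioned into two parts of equal sum. -/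
open Finset

/-!
A deadline `d` with `2 * d = ∑ j, a j` leaves no slack: two agents can both meet it exactly when
each receives total work `d`. An assignment to two agents is the same thing as the subset `S` of
tasks given to the first one, so feasibility is the existence of `S` with `∑ S = ∑ Sᶜ`.
-/

section TwoColoring

variable {ι : Type*} [Fintype ι] [DecidableEq ι]

theorem filter_eq_one_eq_compl_filter_eq_zero (Φ : ι → Fin 2) :
    univ.filter (fun j => Φ j = 1) = (univ.filter (fun j => Φ j = 0))ᶜ := by
  ext j
  simp only [mem_filter, mem_univ, true_and, mem_compl]
  rcases Fin.exists_fin_two.mp ⟨Φ j, rfl⟩ with h | h <;> simp [h]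

theorem exists_fin_two_coloring_iff (P : Finset ι → Finset ι → Prop) :
    (∃ Φ : ι → Fin 2, P (univ.filter (fun j => Φ j = 0)) (univ.filter (fun j => Φ j = 1))) ↔
      ∃ S : Finset ι, P S Sᶜ := by
  constructor
  · rintro ⟨Φ, hΦ⟩
    exact ⟨_, filter_eq_one_eq_compl_filter_eq_zero Φ ▸ hΦ⟩
  · rintro ⟨S, hS⟩
    refine ⟨fun j => if j ∈ S then 0 else 1, ?_⟩
    have hS₀ : univ.filter (fun j => (if j ∈ S then 0 else 1 : Fin 2) = 0) = S := by
      ext j; by_cases h : j ∈ S <;> simp [h]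
    rwa [filter_eq_one_eq_compl_filter_eq_zero, hS₀]

theorem exists_sum_le_and_sum_compl_le_iff (a : ι → ℕ) {d : ℕ} (hd : 2 * d = ∑ j, a j) :
    (∃ S : Finset ι, ∑ j ∈ S, a j ≤ d ∧ ∑ j ∈ Sᶜ, a j ≤ d) ↔
      ∃ S : Finset ι, 2 * ∑ j ∈ S, a j = ∑ j, a j := by
  refine exists_congr fun S => ?_
  have hsplit := sum_add_sum_compl S a
  omega

end TwoColoring

theorem stmt11_general (k : ℕ) (a : Fin k → ℕ) (d : ℕ)
    (hd : 2 * d = ∑ j, a j) :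
    (∃ Φ : Fin k → Fin 2, ∀ i : Fin 2,
        ∑ j ∈ Finset.univ.filter (fun j => Φ j = i), a j ≤ d) ↔
    ∃ S : Finset (Fin k), 2 * ∑ j ∈ S, a j = ∑ j, a j := by
  simp only [Fin.forall_fin_two]
  rw [exists_fin_two_coloring_iff (fun A B => ∑ j ∈ A, a j ≤ d ∧ ∑ j ∈ B, a j ≤ d)]
  exact exists_sum_le_and_sum_compl_le_iff a hd

/-- FFCPS is NP-hard for two agents via the Partition reduction: with tasks of sizes `a j`,
two identical agents, unlimited budget, and deadline `d` with `2·d = ∑ a j`, a feasible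
assignment of all tasks to the two agents meeting the deadline exists iff the numbers can
be partitioned into two parts of equal sum. -/
theorem stmt11 (k : ℕ) (a : Fin k → ℕ) (ha : ∀ j, 0 < a j) (d : ℕ)
    (hd : 2 * d = ∑ j, a j) :
    (∃ Φ : Fin k → Fin 2, ∀ i : Fin 2,
        ∑ j ∈ Finset.univ.filter (fun j => Φ j = i), a j ≤ d) ↔
    ∃ S : Finset (Fin k), 2 * ∑ j ∈ S, a j = ∑ j, a j :=
  stmt11_general k a d hd
end

section
/- The Exact Cover by 3-Sets problem reduces to FFCPS with unit speeds: given a ground set T of q elements and a family S_1, …, S_n of 3-element subsets, construct q tasks and n agents with s_{i,j} = 1 if t_j ∈ S_i and s_{i,j} = ∞ otherwise, deadline d = 3, all minimal salaries 1, and budget v = q/3. Then there exists a feasible coalition (a set of agents N' with ∑_{i∈N'} 1 ≤ q/3 and an assignment of all tasks to agents in N' with each agent's total load at most 3) if and only if T can be exactly covered by q/3 of the sets S_i. -/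
/-!
Sending every element to the unique set that covers it turns an exact cover into a schedule in
which each used agent carries exactly three tasks. Conversely, q tasks on at most q/3 agents with
loads at most 3 force every used agent to carry exactly three tasks, all from its 3-element set;
so the tasks of an agent are exactly its set, and the used agents form an exact cover.
-/

open Finset

theorem Finset.card_fiber_eq_of_mul_card_image_le {α β : Type*} [DecidableEq β]
    {s : Finset α} {f : α → β} {n : ℕ} (hle : ∀ b ∈ s.image f, #{a ∈ s | f a = b} ≤ n)
    (hs : n * #(s.image f) ≤ #s) : ∀ b ∈ s.image f, #{a ∈ s | f a = b} = n := by
  refine (sum_eq_sum_iff_of_le hle).1 (le_antisymm (sum_le_sum hle) ?_)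
  rw [← card_eq_sum_card_image, sum_const, smul_eq_mul, mul_comm]
  exact hs

theorem existsUnique_mem_image_of_card_fiber_eq {α ι : Type*} [Fintype α] [DecidableEq ι]
    {S : ι → Finset α} {Φ : α → ι} (hΦ : ∀ j, j ∈ S (Φ j))
    (hfiber : ∀ i ∈ univ.image Φ, #{j | Φ j = i} = #(S i)) (j : α) :
    ∃! i, i ∈ univ.image Φ ∧ j ∈ S i := by
  refine ⟨Φ j, ⟨mem_image_of_mem Φ (mem_univ j), hΦ j⟩, ?_⟩
  rintro i ⟨hi, hj⟩
  have hfiber_eq : ({j | Φ j = i} : Finset α) = S i :=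
    eq_of_subset_of_card_le (fun k hk => (mem_filter.1 hk).2 ▸ hΦ k) (hfiber i hi).ge
  rw [← hfiber_eq] at hj
  exact (mem_filter.1 hj).2.symm

theorem stmt12_general (q n : ℕ) (S : Fin n → Finset (Fin q))
    (hS : ∀ i, (S i).card = 3) :
    (∃ (N' : Finset (Fin n)) (Φ : Fin q → Fin n),
        N'.card ≤ q / 3 ∧ (∀ j, Φ j ∈ N') ∧ (∀ j, j ∈ S (Φ j)) ∧
        ∀ i, (Finset.univ.filter (fun j => Φ j = i)).card ≤ 3) ↔
    ∃ I : Finset (Fin n), I.card = q / 3 ∧ ∀ j : Fin q, ∃! i, i ∈ I ∧ j ∈ S i := by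
  constructor
  · rintro ⟨N', Φ, hN', hΦN', hΦS, hload⟩
    have hused : #(univ.image Φ) ≤ q / 3 :=
      (card_le_card (image_subset_iff.2 fun j _ => hΦN' j)).trans hN'
    have htasks : q ≤ 3 * #(univ.image Φ) := by
      simpa using card_le_mul_card_image univ 3 fun i _ => hload i
    have hfull := card_fiber_eq_of_mul_card_image_le (fun i _ => hload i) (by simp; omega)
    exact ⟨univ.image Φ, by omega,
      existsUnique_mem_image_of_card_fiber_eq hΦS fun i hi => (hfull i hi).trans (hS i).symm⟩
  · rintro ⟨I, hI, hcover⟩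
    choose Φ hΦ _ using hcover
    refine ⟨I, Φ, hI.le, fun j => (hΦ j).1, fun j => (hΦ j).2, fun i => ?_⟩
    calc #{j | Φ j = i} ≤ #(S i) := card_le_card fun j hj => (mem_filter.1 hj).2 ▸ (hΦ j).2
      _ = 3 := hS i

/-- Reduction from Exact Cover by 3-Sets to FFCPS with unit processing times, deadline 3,
unit minimal salaries and budget q/3: a feasible coalition (a set `N'` of at most q/3 agents
and an assignment of every task to an agent of `N'` that can process it, each agent's load
at most 3) exists iff the ground set can be exactly covered by q/3 of the sets. -/
theorem stmt12 (q n : ℕ) (hq : 3 ∣ q) (S : Fin n → Finset (Fin q))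
    (hS : ∀ i, (S i).card = 3) :
    (∃ (N' : Finset (Fin n)) (Φ : Fin q → Fin n),
        N'.card ≤ q / 3 ∧ (∀ j, Φ j ∈ N') ∧ (∀ j, j ∈ S (Φ j)) ∧
        ∀ i, (Finset.univ.filter (fun j => Φ j = i)).card ≤ 3) ↔
    ∃ I : Finset (Fin n), I.card = q / 3 ∧ ∀ j : Fin q, ∃! i, i ∈ I ∧ j ∈ S i :=
  stmt12_general q n S hS
end

section
/- In the reduction from Exact Set Cover to FFCHS (hourly salary model), the constructed instance has a feasible coalition if and only if the exact set cover instance is a yes-instance. The construction: from ground set T of q elements (q divisible by 3) and 3-element subsets S_1,…,S_n, build q + n tasks and 2n agents, all minimal hourly salaries 1; for i ≤ n: s_{i,j} = 2 if j ≤ q and t_j ∈ S_i (else ∞), and s_{i,q+i} = 5 (else ∞ for dummy tasks); for i > n: s_{i, q+(i−n)} = 6 and all other entries ∞; deadline d = 6, budget v = (7/3)q + 5n. Then an assignment Φ of all q+n tasks to agents with each agent's load at most 6 and total cost ∑_i ∑_{j: Φ(t_j)=i} s_{i,j} ≤ v exists iff T has an exact cover by q/3 of the sets. -/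
open Finset

/-- Which agent may process which task in the FFCHS reduction from Exact Set Cover.
Agents: `Sum.inl i` (i ≤ n, corresponding to the set S_i) and `Sum.inr i` (dummy agents).
Tasks: `Sum.inl j` (elements of the ground set) and `Sum.inr j` (dummy tasks). -/
def allowed13 (q n : ℕ) (S : Fin n → Finset (Fin q)) :
    (Fin n ⊕ Fin n) → (Fin q ⊕ Fin n) → Prop
  | Sum.inl i, Sum.inl j => j ∈ S i
  | Sum.inl i, Sum.inr j => j = i
  | Sum.inr i, Sum.inr j => j = i
  | Sum.inr _, Sum.inl _ => False

/-- Processing times in the FFCHS reduction: a set-agent processes an element task in 2,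
its own dummy task in 5; a dummy agent processes its dummy task in 6. -/
def time13 (q n : ℕ) : (Fin n ⊕ Fin n) → (Fin q ⊕ Fin n) → ℕ
  | Sum.inl _, Sum.inl _ => 2
  | Sum.inl _, Sum.inr _ => 5
  | Sum.inr _, Sum.inr _ => 6
  | Sum.inr _, Sum.inl _ => 0

/-!
Every element task costs 2 and every dummy task costs 5, plus 1 when it stays with its dummy
agent; so a schedule costs 2q + 5n + #K, where K is the set of indices whose dummy task stays
with the dummy agent, and the budget says #K ≤ q/3. A set agent holding an element cannot also
hold its own dummy task (2 + 5 > 6), so every element is held by a set agent in K, which holds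
at most 3 elements, all from its set: hence #K = q/3 and each agent in K holds exactly its set,
i.e. K is an exact cover. Conversely, for an exact cover I, give each element to the set of I
containing it and each dummy task of I to its dummy agent, the others to their set agent; the
loads are at most 6 and the cost is 2q + 5n + q/3.
-/

theorem mul_card_eq_and_existsUnique_of_mul_card_le {α ι : Type*} [Fintype α] [DecidableEq ι]
    {g : α → ι} {S : ι → Finset α} {I : Finset ι} {k : ℕ} (hg : ∀ a, g a ∈ I ∧ a ∈ S (g a))
    (hS : ∀ i, #(S i) ≤ k) (hcard : k * #I ≤ Fintype.card α) :
    k * #I = Fintype.card α ∧ ∀ a, ∃! i, i ∈ I ∧ a ∈ S i := by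
  have hfiber : ∀ i, univ.filter (g · = i) ⊆ S i := by
    intro i b hb
    rw [(mem_filter.1 hb).2.symm]
    exact (hg b).2
  have hfiber_le : ∀ i, #(univ.filter (g · = i)) ≤ k :=
    fun i => (card_le_card (hfiber i)).trans (hS i)
  have hmaps : ∀ a ∈ univ, g a ∈ I := fun a _ => (hg a).1
  have hcard_eq : Fintype.card α = k * #I :=
    le_antisymm (card_le_mul_card_image_of_maps_to hmaps k fun i _ => hfiber_le i) hcard
  have hsum_eq : ∑ i ∈ I, #(univ.filter (g · = i)) = ∑ _i ∈ I, k := by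
    rw [← card_eq_sum_card_fiberwise hmaps, sum_const, smul_eq_mul, card_univ, hcard_eq, mul_comm]
  have hfiber_card := (sum_eq_sum_iff_of_le fun i _ => hfiber_le i).1 hsum_eq
  refine ⟨hcard_eq.symm, fun a => ⟨g a, hg a, ?_⟩⟩
  rintro i ⟨hi, ha⟩
  have hfiber_eq : univ.filter (g · = i) = S i :=
    eq_of_subset_of_card_le (hfiber i) ((hS i).trans (hfiber_card i hi).ge)
  exact ((mem_filter.1 (hfiber_eq ▸ ha)).2).symm

namespace ExactCoverReduction

variable {q n : ℕ} {S : Fin n → Finset (Fin q)}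

theorem allowed13_inl_iff {a : Fin n ⊕ Fin n} {j : Fin q} :
    allowed13 q n S a (.inl j) ↔ ∃ i, a = .inl i ∧ j ∈ S i := by
  cases a <;> simp [allowed13]

theorem allowed13_inr_iff {a : Fin n ⊕ Fin n} {j : Fin n} :
    allowed13 q n S a (.inr j) ↔ a = .inl j ∨ a = .inr j := by
  cases a <;> simp [allowed13, eq_comm]

def keptDummies (Φ : Fin q ⊕ Fin n → Fin n ⊕ Fin n) : Finset (Fin n) :=
  {i | Φ (.inr i) = .inr i}

theorem cost_eq {Φ : Fin q ⊕ Fin n → Fin n ⊕ Fin n} (hΦ : ∀ t, allowed13 q n S (Φ t) t) :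
    ∑ t, time13 q n (Φ t) t = 2 * q + 5 * n + #(keptDummies Φ) := by
  have helem : ∀ j, time13 q n (Φ (.inl j)) (.inl j) = 2 := by
    intro j
    obtain ⟨i, hi, -⟩ := allowed13_inl_iff.1 (hΦ (.inl j))
    rw [hi]; rfl
  have hdummy : ∀ i,
      time13 q n (Φ (.inr i)) (.inr i) = 5 + if i ∈ keptDummies Φ then 1 else 0 := by
    intro i
    rcases allowed13_inr_iff.1 (hΦ (.inr i)) with h | h <;> simp [keptDummies, h, time13]
  simp only [Fintype.sum_sum_type, helem, hdummy, sum_add_distrib, sum_boole]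
  simp [mul_comm, add_assoc]

theorem mem_keptDummies_of_load_le {Φ : Fin q ⊕ Fin n → Fin n ⊕ Fin n}
    (hΦ : ∀ t, allowed13 q n S (Φ t) t) {i : Fin n}
    (hload : ∑ t ∈ univ.filter (Φ · = .inl i), time13 q n (.inl i) t ≤ 6)
    {j : Fin q} (hj : Φ (.inl j) = .inl i) : i ∈ keptDummies Φ := by
  by_contra hi
  have hown : Φ (.inr i) = .inl i :=
    (allowed13_inr_iff.1 (hΦ (.inr i))).resolve_right (by simpa [keptDummies] using hi)
  have hsub : {.inl j, .inr i} ⊆ univ.filter (Φ · = .inl i) := by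
    simp [insert_subset_iff, hj, hown]
  have hle := (sum_le_sum_of_subset (f := time13 q n (.inl i)) hsub).trans hload
  rw [sum_pair Sum.inl_ne_inr] at hle
  simp [time13] at hle

theorem exists_exactCover_of_feasible (hq : 3 ∣ q) (hS : ∀ i, #(S i) ≤ 3)
    {Φ : Fin q ⊕ Fin n → Fin n ⊕ Fin n} (hΦ : ∀ t, allowed13 q n S (Φ t) t)
    (hload : ∀ a, ∑ t ∈ univ.filter (Φ · = a), time13 q n a t ≤ 6)
    (hcost : ∑ t, time13 q n (Φ t) t ≤ 7 * (q / 3) + 5 * n) :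
    ∃ I : Finset (Fin n), #I = q / 3 ∧ ∀ j, ∃! i, i ∈ I ∧ j ∈ S i := by
  obtain ⟨m, rfl⟩ := hq
  rw [cost_eq hΦ] at hcost
  rw [Nat.mul_div_cancel_left m three_pos] at hcost ⊢
  choose g hgΦ hgS using fun j => allowed13_inl_iff.1 (hΦ (.inl j))
  have hg : ∀ j, g j ∈ keptDummies Φ ∧ j ∈ S (g j) :=
    fun j => ⟨mem_keptDummies_of_load_le hΦ (hload _) (hgΦ j), hgS j⟩
  obtain ⟨hcard, hcover⟩ :=
    mul_card_eq_and_existsUnique_of_mul_card_le hg hS (by simp only [Fintype.card_fin]; omega)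
  exact ⟨keptDummies Φ, by simp only [Fintype.card_fin] at hcard; omega, hcover⟩

def scheduleOfCover (c : Fin q → Fin n) (I : Finset (Fin n)) : Fin q ⊕ Fin n → Fin n ⊕ Fin n
  | .inl j => .inl (c j)
  | .inr i => if i ∈ I then .inr i else .inl i

variable {c : Fin q → Fin n} {I : Finset (Fin n)}

@[simp]
theorem scheduleOfCover_inl (j : Fin q) : scheduleOfCover c I (.inl j) = .inl (c j) := rfl

@[simp]
theorem scheduleOfCover_inr (i : Fin n) :
    scheduleOfCover c I (.inr i) = if i ∈ I then .inr i else .inl i := rfl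

theorem allowed13_scheduleOfCover (hc : ∀ j, j ∈ S (c j)) (t : Fin q ⊕ Fin n) :
    allowed13 q n S (scheduleOfCover c I t) t := by
  rcases t with j | i
  · exact hc j
  · by_cases hi : i ∈ I <;> simp [allowed13, hi]

theorem keptDummies_scheduleOfCover : keptDummies (scheduleOfCover c I) = I := by
  ext i
  by_cases hi : i ∈ I <;> simp [keptDummies, hi]

theorem load_scheduleOfCover_le (hc : ∀ j, c j ∈ I ∧ j ∈ S (c j)) (hS : ∀ i, #(S i) ≤ 3)
    (a : Fin n ⊕ Fin n) :
    ∑ t ∈ univ.filter (scheduleOfCover c I · = a), time13 q n a t ≤ 6 := by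
  rcases a with i | i
  · by_cases hi : i ∈ I
    · have hsub : univ.filter (scheduleOfCover c I · = .inl i) ⊆ (S i).map .inl := by
        intro t ht
        rcases t with j | j <;> simp only [mem_filter, mem_univ, true_and] at ht
        · simpa [← Sum.inl_injective ht] using (hc j).2
        · by_cases hj : j ∈ I <;> simp_all
      calc _ ≤ ∑ t ∈ (S i).map .inl, time13 q n (.inl i) t := sum_le_sum_of_subset hsub
        _ = 2 * #(S i) := by simp [time13, mul_comm]
        _ ≤ 6 := by linarith [hS i]
    · have hsub : univ.filter (scheduleOfCover c I · = .inl i) ⊆ {.inr i} := by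
        intro t ht
        rcases t with j | j <;> simp only [mem_filter, mem_univ, true_and] at ht
        · exact absurd (Sum.inl_injective ht ▸ (hc j).1) hi
        · by_cases hj : j ∈ I <;> simp_all
      calc _ ≤ ∑ t ∈ {.inr i}, time13 q n (.inl i) t := sum_le_sum_of_subset hsub
        _ ≤ 6 := by simp [time13]
  · have hsub : univ.filter (scheduleOfCover c I · = .inr i) ⊆ {.inr i} := by
      intro t ht
      rcases t with j | j <;> simp only [mem_filter, mem_univ, true_and] at ht
      · simp at ht
      · by_cases hj : j ∈ I <;> simp_all
    calc _ ≤ ∑ t ∈ {.inr i}, time13 q n (.inr i) t := sum_le_sum_of_subset hsub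
      _ ≤ 6 := by simp [time13]

theorem exists_feasible_of_exactCover (hq : 3 ∣ q) (hS : ∀ i, #(S i) ≤ 3)
    (hI : #I = q / 3) (hcover : ∀ j, ∃ i, i ∈ I ∧ j ∈ S i) :
    ∃ Φ : Fin q ⊕ Fin n → Fin n ⊕ Fin n, (∀ t, allowed13 q n S (Φ t) t) ∧
      (∀ a, ∑ t ∈ univ.filter (Φ · = a), time13 q n a t ≤ 6) ∧
      ∑ t, time13 q n (Φ t) t ≤ 7 * (q / 3) + 5 * n := by
  choose c hc using hcover
  have hallowed := allowed13_scheduleOfCover (I := I) fun j => (hc j).2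
  refine ⟨scheduleOfCover c I, hallowed, load_scheduleOfCover_le hc hS, ?_⟩
  rw [cost_eq hallowed, keptDummies_scheduleOfCover, hI]
  omega

end ExactCoverReduction

open ExactCoverReduction

theorem stmt13_general (q n : ℕ) (hq : 3 ∣ q) (S : Fin n → Finset (Fin q))
    (hS : ∀ i, (S i).card = 3) :
    (∃ Φ : (Fin q ⊕ Fin n) → (Fin n ⊕ Fin n),
        (∀ t, allowed13 q n S (Φ t) t) ∧
        (∀ a, ∑ t ∈ Finset.univ.filter (fun t => Φ t = a), time13 q n a t ≤ 6) ∧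
        ∑ t : Fin q ⊕ Fin n, time13 q n (Φ t) t ≤ 7 * (q / 3) + 5 * n) ↔
    ∃ I : Finset (Fin n), I.card = q / 3 ∧ ∀ j : Fin q, ∃! i, i ∈ I ∧ j ∈ S i := by
  have hS_le : ∀ i, #(S i) ≤ 3 := fun i => (hS i).le
  exact ⟨fun ⟨_, hΦ, hload, hcost⟩ => exists_exactCover_of_feasible hq hS_le hΦ hload hcost,
    fun ⟨_, hI, hcover⟩ => exists_feasible_of_exactCover hq hS_le hI fun j => (hcover j).exists⟩

/-- Correctness of the reduction from Exact Set Cover to FFCHS (all hourly salaries 1,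
deadline 6, budget (7/3)q + 5n): an assignment of all q + n tasks to allowed agents with
every agent's load at most 6 and total cost at most 7·(q/3) + 5·n exists iff the ground set
has an exact cover by q/3 of the 3-element sets. -/
theorem stmt13 (q n : ℕ) (hq : 3 ∣ q) (S : Fin n → Finset (Fin q))
    (hS : ∀ i, (S i).card = 3)
    (hocc : ∀ j : Fin q, (Finset.univ.filter (fun i => j ∈ S i)).card ≤ 3) :
    (∃ Φ : (Fin q ⊕ Fin n) → (Fin n ⊕ Fin n),
        (∀ t, allowed13 q n S (Φ t) t) ∧
        (∀ a, ∑ t ∈ Finset.univ.filter (fun t => Φ t = a), time13 q n a t ≤ 6) ∧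
        ∑ t : Fin q ⊕ Fin n, time13 q n (Φ t) t ≤ 7 * (q / 3) + 5 * n) ↔
    ∃ I : Finset (Fin n), I.card = q / 3 ∧ ∀ j : Fin q, ∃! i, i ∈ I ∧ j ∈ S i :=
  stmt13_general q n hq S hS
end

section
/- The inapproximability reduction for FFCPS is correct: given a SetCover instance with elements t_1,…,t_q and sets S_1,…,S_n, and any α ≥ 1, construct q tasks and n agents with s_{i,j} = 1 if t_j ∈ S_i and s_{i,j} = αq + 1 otherwise, and unit agent costs. Then (i) if T can be covered by K sets, there is an assignment of all tasks to K agents with makespan at most q; and (ii) any assignment of all tasks to a set of agents with makespan at most αq only assigns task t_j to agents i with t_j ∈ S_i, so the used agents correspond to a set cover of T. -/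
open Finset

section Assignment

variable {ι τ : Type*} [Fintype τ] [DecidableEq ι]

theorem le_sum_fiber (Φ : τ → ι) (c : ι → τ → ℕ) (j : τ) :
    c (Φ j) j ≤ ∑ j' ∈ univ.filter (fun j' => Φ j' = Φ j), c (Φ j) j' :=
  single_le_sum (fun _ _ => Nat.zero_le _) (mem_filter.2 ⟨mem_univ j, rfl⟩)

theorem sum_fiber_le_card (Φ : τ → ι) (c : ι → τ → ℕ) (hc : ∀ j, c (Φ j) j ≤ 1) (i : ι) :
    ∑ j ∈ univ.filter (fun j => Φ j = i), c i j ≤ Fintype.card τ :=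
  calc ∑ j ∈ univ.filter (fun j => Φ j = i), c i j
      ≤ (univ.filter (fun j => Φ j = i)).card • 1 :=
        sum_le_card_nsmul _ _ _ fun j hj => (mem_filter.1 hj).2 ▸ hc j
    _ ≤ Fintype.card τ := by
        rw [smul_eq_mul, mul_one]
        exact card_filter_le _ _

theorem card_image_le_of_forall_mem (Φ : τ → ι) {I : Finset ι} (hΦ : ∀ j, Φ j ∈ I) :
    (univ.image Φ).card ≤ I.card :=
  card_le_card (image_subset_iff.2 fun j _ => hΦ j)

end Assignment

theorem stmt14_general (q n : ℕ) (S : Fin n → Finset (Fin q)) (α : ℕ) (K : ℕ)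
    (time : Fin n → Fin q → ℕ)
    (htime : ∀ i j, time i j = if j ∈ S i then 1 else α * q + 1) :
    ((∃ I : Finset (Fin n), I.card = K ∧ ∀ j, ∃ i ∈ I, j ∈ S i) →
      ∃ Φ : Fin q → Fin n, (Finset.univ.image Φ).card ≤ K ∧
        ∀ i, ∑ j ∈ Finset.univ.filter (fun j => Φ j = i), time i j ≤ q) ∧
    (∀ Φ : Fin q → Fin n,
      (∀ i, ∑ j ∈ Finset.univ.filter (fun j => Φ j = i), time i j ≤ α * q) →
      (∀ j, j ∈ S (Φ j)) ∧ ∀ j, ∃ i ∈ Finset.univ.image Φ, j ∈ S i) := by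
  constructor
  · rintro ⟨I, rfl, hcover⟩
    choose Φ hΦI hΦS using hcover
    refine ⟨Φ, card_image_le_of_forall_mem Φ hΦI, fun i => ?_⟩
    simpa using sum_fiber_le_card Φ time (fun j => by simp [htime, hΦS j]) i
  · intro Φ hmakespan
    have hΦS : ∀ j, j ∈ S (Φ j) := by
      intro j
      by_contra hj
      have := (le_sum_fiber Φ time j).trans (hmakespan (Φ j))
      rw [htime, if_neg hj] at this
      omega
    exact ⟨hΦS, fun j => ⟨Φ j, mem_image_of_mem Φ (mem_univ j), hΦS j⟩⟩

/-- Correctness of the inapproximability gadget for FFCPS built from a SetCover instance: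
processing time 1 if the task's element belongs to the agent's set, and α·q + 1 otherwise.
(i) A cover by K sets yields an assignment using at most K agents with makespan at most q.
(ii) Any assignment with makespan at most α·q only assigns tasks to agents whose set
contains the corresponding element, so the used agents form a set cover. -/
theorem stmt14 (q n : ℕ) (S : Fin n → Finset (Fin q)) (α : ℕ) (hα : 1 ≤ α) (K : ℕ)
    (time : Fin n → Fin q → ℕ)
    (htime : ∀ i j, time i j = if j ∈ S i then 1 else α * q + 1) :
    ((∃ I : Finset (Fin n), I.card = K ∧ ∀ j, ∃ i ∈ I, j ∈ S i) →
      ∃ Φ : Fin q → Fin n, (Finset.univ.image Φ).card ≤ K ∧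
        ∀ i, ∑ j ∈ Finset.univ.filter (fun j => Φ j = i), time i j ≤ q) ∧
    (∀ Φ : Fin q → Fin n,
      (∀ i, ∑ j ∈ Finset.univ.filter (fun j => Φ j = i), time i j ≤ α * q) →
      (∀ j, j ∈ S (Φ j)) ∧ ∀ j, ∃ i ∈ Finset.univ.image Φ, j ∈ S i) :=
  stmt14_general q n S α K time htime
end

section
/- In the three-agent example with budget v = 5, identical agents a, b, c with minimal salary 2, integer salaries, and exactly the two-agent coalitions feasible, the von Neumann–Morgenstern stable set of the domination relation on feasible coalitions is empty. -/
open Finset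

/-- Feasible outcomes of the three-agent example: budget v = 5, agents Fin 3 with minimal
salary 2, exactly the two-agent coalitions feasible, integer salaries. -/
def feas17 (C : Coal (Fin 3)) : Prop :=
  C.mem.card = 2 ∧ (∀ i ∈ C.mem, 2 ≤ C.sal i) ∧
    C.cost = ∑ i ∈ C.mem, C.sal i ∧ C.cost ≤ 5

/-- Payoff of agent `i` under outcome `C`: her salary if she is a member, else 0. -/
def pay17 (C : Coal (Fin 3)) (i : Fin 3) : ℕ :=
  if i ∈ C.mem then C.sal i else 0

/-- Outcome `C'` dominates outcome `C`: `C'` is feasible and every member of `C'` gets in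
`C'` a strictly higher payoff than under `C`. -/
def dom17 (C' C : Coal (Fin 3)) : Prop :=
  feas17 C' ∧ ∀ i ∈ C'.mem, pay17 C i < pay17 C' i

/-!
Call `splitThreeTwo x y` the outcomes in which `x` and `y` form the coalition paying `x` the
salary `3` and `y` the salary `2`. Such an outcome is dominated exactly by the outcomes
`splitThreeTwo y z`, `z` the third agent: `y` must be paid more and `z` gains from `0`, and the
budget leaves no other salaries. So the classes for `(0,1)`, `(1,2)`, `(2,0)` form a domination
cycle of length three. A stable set meets at least one of two consecutive classes (external
stability) and not both (internal stability), which is impossible around an odd cycle.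
-/

section StableSet

variable {α : Type*}

/-- A von Neumann–Morgenstern stable set of the relation `dom` (read `dom c' c` as
"`c'` dominates `c`") on the outcomes `S`. -/
def IsVNMStableSet (S : Set α) (dom : α → α → Prop) (K : Set α) : Prop :=
  K ⊆ S ∧ (∀ c ∈ K, ∀ c' ∈ K, ¬ dom c' c) ∧ ∀ c ∈ S, c ∉ K → ∃ c' ∈ K, dom c' c

variable {S : Set α} {dom : α → α → Prop} {K P Q : Set α}

lemma IsVNMStableSet.meets_or_meets (hK : IsVNMStableSet S dom K) (hP : (P ∩ S).Nonempty)
    (hPQ : ∀ c ∈ P, {c' | dom c' c} = Q) : (K ∩ P).Nonempty ∨ (K ∩ Q).Nonempty := by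
  obtain ⟨c, hcP, hcS⟩ := hP
  by_cases hcK : c ∈ K
  · exact Or.inl ⟨c, hcK, hcP⟩
  · obtain ⟨c', hc'K, hdom⟩ := hK.2.2 c hcS hcK
    refine Or.inr ⟨c', hc'K, ?_⟩
    rw [← hPQ c hcP]
    exact hdom

lemma IsVNMStableSet.not_meets_and_meets (hK : IsVNMStableSet S dom K)
    (hPQ : ∀ c ∈ P, {c' | dom c' c} = Q) : ¬ ((K ∩ P).Nonempty ∧ (K ∩ Q).Nonempty) := by
  rintro ⟨⟨c, hcK, hcP⟩, ⟨c', hc'K, hc'Q⟩⟩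
  refine hK.2.1 c hcK c' hc'K ?_
  rw [← hPQ c hcP] at hc'Q
  exact hc'Q

theorem not_isVNMStableSet_of_dominators_cycle {R : Set α} (hP : (P ∩ S).Nonempty)
    (hQ : (Q ∩ S).Nonempty) (hR : (R ∩ S).Nonempty)
    (hPQ : ∀ c ∈ P, {c' | dom c' c} = Q) (hQR : ∀ c ∈ Q, {c' | dom c' c} = R)
    (hRP : ∀ c ∈ R, {c' | dom c' c} = P) : ¬ IsVNMStableSet S dom K := by
  intro hK
  have := hK.meets_or_meets hP hPQ
  have := hK.meets_or_meets hQ hQR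
  have := hK.meets_or_meets hR hRP
  have := hK.not_meets_and_meets hPQ
  have := hK.not_meets_and_meets hQR
  have := hK.not_meets_and_meets hRP
  tauto

end StableSet

lemma feas17.sal_pair {C : Coal (Fin 3)} (hC : feas17 C) {a b : Fin 3} (hab : a ≠ b)
    (hmem : C.mem = {a, b}) : 2 ≤ C.sal a ∧ 2 ≤ C.sal b ∧ C.sal a + C.sal b ≤ 5 := by
  obtain ⟨-, hmin, hcost, hbudget⟩ := hC
  rw [hmem, Finset.sum_pair hab] at hcost
  exact ⟨hmin a (by simp [hmem]), hmin b (by simp [hmem]), hcost ▸ hbudget⟩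

lemma feas17.sal_le_three {C : Coal (Fin 3)} (hC : feas17 C) {i : Fin 3} (hi : i ∈ C.mem) :
    C.sal i ≤ 3 := by
  obtain ⟨a, b, hab, hmem⟩ := Finset.card_eq_two.mp hC.1
  have := hC.sal_pair hab hmem
  rw [hmem, Finset.mem_insert, Finset.mem_singleton] at hi
  rcases hi with rfl | rfl <;> omega

lemma Fin.eq_pair_of_card_eq_two_of_notMem {x y z : Fin 3} (hxy : x ≠ y) (hxz : x ≠ z)
    (hyz : y ≠ z) {s : Finset (Fin 3)} (hs : s.card = 2) (hx : x ∉ s) : s = {y, z} := by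
  refine Finset.eq_of_subset_of_card_le (fun i hi => ?_) (by rw [hs, Finset.card_pair hyz])
  have hix : i ≠ x := fun h => hx (h ▸ hi)
  have : ∀ i x y z : Fin 3, x ≠ y → x ≠ z → y ≠ z → i ≠ x → i = y ∨ i = z := by decide
  simpa using this i x y z hxy hxz hyz hix

def splitThreeTwo (x y : Fin 3) : Set (Coal (Fin 3)) :=
  {C | feas17 C ∧ C.mem = {x, y} ∧ C.sal x = 3 ∧ C.sal y = 2}

lemma splitThreeTwo_inter_feasible_nonempty {x y : Fin 3} (hxy : x ≠ y) :
    (splitThreeTwo x y ∩ {C | feas17 C}).Nonempty := by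
  have hfeas : feas17 ⟨{x, y}, fun i => if i = x then 3 else 2, 5⟩ := by
    refine ⟨Finset.card_pair hxy, fun i _ => ?_, ?_, le_rfl⟩
    · dsimp only
      split_ifs <;> omega
    · simp [Finset.sum_pair hxy, hxy.symm]
  exact ⟨_, ⟨hfeas, rfl, by simp, by simp [hxy.symm]⟩, hfeas⟩

lemma pay17_of_mem {C : Coal (Fin 3)} {i : Fin 3} (hi : i ∈ C.mem) : pay17 C i = C.sal i :=
  if_pos hi

lemma pay17_of_notMem {C : Coal (Fin 3)} {i : Fin 3} (hi : i ∉ C.mem) : pay17 C i = 0 :=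
  if_neg hi

lemma dominators_splitThreeTwo {x y z : Fin 3} (hxy : x ≠ y) (hxz : x ≠ z) (hyz : y ≠ z) :
    ∀ C ∈ splitThreeTwo x y, {C' | dom17 C' C} = splitThreeTwo y z := by
  rintro C ⟨-, hCmem, hCx, hCy⟩
  have hpay_x : pay17 C x = 3 := by rw [pay17_of_mem (by simp [hCmem]), hCx]
  have hpay_y : pay17 C y = 2 := by rw [pay17_of_mem (by simp [hCmem]), hCy]
  have hpay_z : pay17 C z = 0 := pay17_of_notMem (by simp [hCmem, hxz.symm, hyz.symm])
  ext C'
  constructor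
  · rintro ⟨hC', hdom⟩
    have hx : x ∉ C'.mem := fun hx => by
      have := hdom x hx
      rw [hpay_x, pay17_of_mem hx] at this
      have := hC'.sal_le_three hx
      omega
    have hmem := Fin.eq_pair_of_card_eq_two_of_notMem hxy hxz hyz hC'.1 hx
    have hy : y ∈ C'.mem := by simp [hmem]
    have := hdom y hy
    rw [hpay_y, pay17_of_mem hy] at this
    have := hC'.sal_le_three hy
    have := hC'.sal_pair hyz hmem
    exact ⟨hC', hmem, by omega, by omega⟩
  · rintro ⟨hC', hmem, hC'y, hC'z⟩
    refine ⟨hC', fun i hi => ?_⟩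
    rw [pay17_of_mem hi]
    rw [hmem, Finset.mem_insert, Finset.mem_singleton] at hi
    rcases hi with rfl | rfl <;> omega

/-- In the three-agent example (v = 5, minimal salaries 2, two-agent coalitions feasible),
no von Neumann–Morgenstern stable set of the domination relation exists: there is no set K
of feasible outcomes that is internally stable (no member dominates another member) and
externally stable (every feasible outcome outside K is dominated by some member of K). -/
theorem stmt17 :
    ¬ ∃ K : Set (Coal (Fin 3)),
      (∀ C ∈ K, feas17 C) ∧
      (∀ C ∈ K, ∀ C' ∈ K, ¬ dom17 C' C) ∧
      (∀ C, feas17 C → C ∉ K → ∃ C' ∈ K, dom17 C' C) := by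
  rintro ⟨K, hK⟩
  exact not_isVNMStableSet_of_dominators_cycle
    (splitThreeTwo_inter_feasible_nonempty (x := 0) (y := 1) (by decide))
    (splitThreeTwo_inter_feasible_nonempty (x := 1) (y := 2) (by decide))
    (splitThreeTwo_inter_feasible_nonempty (x := 2) (y := 0) (by decide))
    (dominators_splitThreeTwo (by decide) (by decide) (by decide))
    (dominators_splitThreeTwo (by decide) (by decide) (by decide))
    (dominators_splitThreeTwo (by decide) (by decide) (by decide)) hK
end

section
/- In the project salary model, if the values s_i* for i in the cheapest feasible coalition N* are maximal solutions of the system: (1) ∑_{i∈N*} s_i ≤ v; (2) for every feasible agent set A ≠ N* with N* ≺ A: ∑_{i∈N*∖A} s_i ≤ ∑_{i∈A∖N*} m_i; (3) for every feasible agent set A ≠ N* with A ≺ N*: ∑_{i∈N*∖A} s_i < ∑_{i∈A∖N*} m_i; then the profile where agents in N* ask s_i* and all other agents ask their minimal salaries m_i is a Strong Nash Equilibrium of the centralized game, and all agents of N* receive positive payoffs. -/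
/-!
For a profile that agrees with the minimal salaries outside `N*`, the constraint system says
exactly that `N*` is the cheapest feasible coalition, because comparing `N*` with a rival `A`
only involves the sums over `N* ∖ A` and `A ∖ N*`. So `N*` wins at `σ` and its members are paid
`s*ᵢ ≥ mᵢ > 0`. A group that strictly gains by deviating lies inside the new winner `W`. If
`W ≠ N*`, the deviators only raised asks inside `W`, which keeps `N*` ahead of `W`. If `W = N*`,
the deviators raised asks inside `N*` and `N*` still wins, so the raised asks solve the system,
against the maximality of `s*`.
-/

open Classical Finset

namespace SalaryGame

variable {α : Type*} (F : Finset α → Prop) (prec : Finset α → Finset α → Prop) (v : ℕ)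

def IsCheapest (s : α → ℕ) (W : Finset α) : Prop :=
  (F W ∧ ∑ i ∈ W, s i ≤ v) ∧ ∀ A, A ≠ W → F A → ∑ i ∈ A, s i ≤ v →
    (∑ i ∈ W, s i < ∑ i ∈ A, s i ∨ (∑ i ∈ W, s i = ∑ i ∈ A, s i ∧ prec W A))

noncomputable def payoff (s : α → ℕ) (i : α) : ℕ :=
  if ∃ W, IsCheapest F prec v s W ∧ i ∈ W then s i else 0

/-- `W` is not displaced by the rival `A` at the asks `s`, in the form of constraints (2), (3). -/
def Beats [DecidableEq α] (s : α → ℕ) (W A : Finset α) : Prop :=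
  (prec W A → ∑ i ∈ W \ A, s i ≤ ∑ i ∈ A \ W, s i) ∧
    (prec A W → ∑ i ∈ W \ A, s i < ∑ i ∈ A \ W, s i)

def SalaryConstraints [DecidableEq α] (m : α → ℕ) (N : Finset α) (s : α → ℕ) : Prop :=
  (∑ i ∈ N, s i ≤ v) ∧
  (∀ A : Finset α, F A → A ≠ N → prec N A → ∑ i ∈ N \ A, s i ≤ ∑ i ∈ A \ N, m i) ∧
  (∀ A : Finset α, F A → A ≠ N → prec A N → ∑ i ∈ N \ A, s i < ∑ i ∈ A \ N, m i)

variable {F prec v}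

theorem payoff_le (s : α → ℕ) (i : α) : payoff F prec v s i ≤ s i := by
  unfold payoff
  split_ifs <;> omega

theorem payoff_of_mem {s : α → ℕ} {W : Finset α} {i : α} (hW : IsCheapest F prec v s W) (hi : i ∈ W) :
    payoff F prec v s i = s i :=
  if_pos ⟨W, hW, hi⟩

theorem exists_isCheapest_of_payoff_pos {s : α → ℕ} {i : α} (h : 0 < payoff F prec v s i) :
    ∃ W, IsCheapest F prec v s W ∧ i ∈ W := by
  by_contra hex
  simp only [payoff, if_neg hex, lt_irrefl] at h

section Beats

variable [DecidableEq α] {s t : α → ℕ} {W A : Finset α}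

theorem Beats.mono (h : Beats prec s W A) (heq : ∀ i ∈ W \ A, t i = s i)
    (hle : ∀ i ∈ A \ W, s i ≤ t i) : Beats prec t W A := by
  have hW : ∑ i ∈ W \ A, t i = ∑ i ∈ W \ A, s i := sum_congr rfl heq
  have hA : ∑ i ∈ A \ W, s i ≤ ∑ i ∈ A \ W, t i := sum_le_sum hle
  exact ⟨fun hp => hW ▸ (h.1 hp).trans hA, fun hp => hW ▸ (h.2 hp).trans_le hA⟩

theorem Beats.antisymm [Std.Trichotomous prec] (hWA : Beats prec s W A)
    (hAW : Beats prec s A W) : W = A := by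
  rcases trichotomous_of prec W A with hp | rfl | hp
  · exact absurd (hWA.1 hp) (hAW.2 hp).not_ge
  · rfl
  · exact absurd (hAW.1 hp) (hWA.2 hp).not_ge

end Beats

section Cheapest

variable [DecidableEq α] [IsStrictTotalOrder _ prec] {s : α → ℕ} {W : Finset α}

/-- The budget bound on the rival `A` can be dropped: a rival over budget is dearer than `W`. -/
theorem isCheapest_iff :
    IsCheapest F prec v s W ↔
      (F W ∧ ∑ i ∈ W, s i ≤ v) ∧ ∀ A, F A → A ≠ W → Beats prec s W A := by
  simp only [IsCheapest, Beats, sum_sdiff_le_sum_sdiff, sum_sdiff_lt_sum_sdiff]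
  refine and_congr_right fun ⟨_, hWv⟩ => ⟨fun h A hA hne => ⟨fun hp => ?_, fun hp => ?_⟩,
    fun h A hne hA hAv => ?_⟩
  · by_cases hAv : ∑ i ∈ A, s i ≤ v
    · rcases h A hne hA hAv with hlt | ⟨heq, -⟩
      exacts [hlt.le, heq.le]
    · omega
  · by_cases hAv : ∑ i ∈ A, s i ≤ v
    · rcases h A hne hA hAv with hlt | ⟨-, hp'⟩
      exacts [hlt, absurd (_root_.trans hp hp') (irrefl A)]
    · omega
  · rcases trichotomous_of prec W A with hp | rfl | hp
    · exact (((h A hA hne).1 hp).lt_or_eq).imp id fun heq => ⟨heq, hp⟩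
    · exact absurd rfl hne
    · exact Or.inl ((h A hA hne).2 hp)

theorem IsCheapest.unique {W' : Finset α} (h : IsCheapest F prec v s W)
    (h' : IsCheapest F prec v s W') : W = W' := by
  by_contra hne
  rw [isCheapest_iff] at h h'
  exact hne ((h.2 W' h'.1.1 (Ne.symm hne)).antisymm (h'.2 W h.1.1 hne))

theorem IsCheapest.eq_of_le {t : α → ℕ} {N : Finset α} (hW : IsCheapest F prec v t W)
    (hN : IsCheapest F prec v s N) (heq : ∀ i ∈ N \ W, t i = s i)
    (hle : ∀ i ∈ W \ N, s i ≤ t i) : W = N := by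
  by_contra hne
  rw [isCheapest_iff] at hW hN
  exact hne ((hW.2 N hN.1.1 (Ne.symm hne)).antisymm ((hN.2 W hW.1.1 hne).mono heq hle))

theorem mem_of_payoff_pos {i : α} (hW : IsCheapest F prec v s W)
    (h : 0 < payoff F prec v s i) : i ∈ W := by
  obtain ⟨W', hW', hi⟩ := exists_isCheapest_of_payoff_pos h
  exact hW'.unique hW ▸ hi

end Cheapest

section Constraints

variable [DecidableEq α] {m : α → ℕ} {N : Finset α} {s t : α → ℕ}

theorem SalaryConstraints.mono (h : SalaryConstraints F prec v m N s)
    (hle : ∀ i ∈ N, t i ≤ s i) : SalaryConstraints F prec v m N t := by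
  have hsub : ∀ A : Finset α, ∑ i ∈ N \ A, t i ≤ ∑ i ∈ N \ A, s i := fun A =>
    sum_le_sum fun i hi => hle i (mem_sdiff.1 hi).1
  exact ⟨(sum_le_sum hle).trans h.1, fun A hA hne hp => (hsub A).trans (h.2.1 A hA hne hp),
    fun A hA hne hp => (hsub A).trans_lt (h.2.2 A hA hne hp)⟩

/-- The constraint system on `N` says that `N` wins when everybody else asks the minimum. -/
theorem salaryConstraints_iff [IsStrictTotalOrder _ prec] (hN : F N) :
    SalaryConstraints F prec v m N s ↔ IsCheapest F prec v (N.piecewise s m) N := by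
  have hin : ∀ B ⊆ N, ∑ i ∈ B, N.piecewise s m i = ∑ i ∈ B, s i := fun B hB =>
    sum_congr rfl fun i hi => piecewise_eq_of_mem _ _ _ (hB hi)
  have hout : ∀ A : Finset α, ∑ i ∈ A \ N, N.piecewise s m i = ∑ i ∈ A \ N, m i := fun A =>
    sum_congr rfl fun i hi => piecewise_eq_of_notMem _ _ _ (mem_sdiff.1 hi).2
  simp only [isCheapest_iff, Beats, SalaryConstraints, hin N subset_rfl,
    hin _ sdiff_subset, hout, hN, true_and]
  exact and_congr_right fun _ =>
    ⟨fun h A hA hne => ⟨h.1 A hA hne, h.2 A hA hne⟩,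
      fun h => ⟨fun A hA hne => (h A hA hne).1, fun A hA hne => (h A hA hne).2⟩⟩

theorem no_profitable_deviation [IsStrictTotalOrder _ prec] {sstar : α → ℕ} (hN : F N)
    (hsat : SalaryConstraints F prec v m N sstar)
    (hmax : ∀ i ∈ N, ¬ SalaryConstraints F prec v m N (Function.update sstar i (sstar i + 1)))
    {D : Finset α} {s' : α → ℕ} (hD : D.Nonempty) (hvalid : ∀ i, m i ≤ s' i)
    (hfix : ∀ i ∉ D, s' i = N.piecewise sstar m i)
    (hgain : ∀ i ∈ D, payoff F prec v (N.piecewise sstar m) i < payoff F prec v s' i) :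
    False := by
  obtain ⟨i₀, hi₀⟩ := hD
  obtain ⟨W, hW, -⟩ := exists_isCheapest_of_payoff_pos (Nat.zero_lt_of_lt (hgain i₀ hi₀))
  have hDW : ∀ i ∈ D, i ∈ W := fun i hi =>
    mem_of_payoff_pos hW (Nat.zero_lt_of_lt (hgain i hi))
  have hσ : IsCheapest F prec v (N.piecewise sstar m) N := (salaryConstraints_iff hN).1 hsat
  obtain rfl : W = N := hW.eq_of_le hσ
    (fun i hi => hfix i fun hiD => (mem_sdiff.1 hi).2 (hDW i hiD))
    (fun i hi => (piecewise_eq_of_notMem N sstar m (mem_sdiff.1 hi).2).trans_le (hvalid i))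
  have hs' : W.piecewise s' m = s' := by
    ext i
    by_cases hi : i ∈ W
    · exact piecewise_eq_of_mem _ _ _ hi
    · rw [piecewise_eq_of_notMem _ _ _ hi, hfix i (fun hiD => hi (hDW i hiD)),
        piecewise_eq_of_notMem _ _ _ hi]
  have hraise : ∀ i ∈ W, Function.update sstar i₀ (sstar i₀ + 1) i ≤ s' i := by
    intro i hi
    by_cases hiD : i ∈ D
    · have hlt : sstar i < s' i := by
        simpa only [payoff_of_mem hσ hi, piecewise_eq_of_mem _ _ _ hi]
          using (hgain i hiD).trans_le (payoff_le s' i)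
      rcases eq_or_ne i i₀ with rfl | hne
      · simpa using hlt
      · simpa [hne] using hlt.le
    · rw [Function.update_of_ne (ne_of_mem_of_not_mem hi₀ hiD).symm, hfix i hiD,
        piecewise_eq_of_mem _ _ _ hi]
  exact hmax i₀ (hDW i₀ hi₀) (((salaryConstraints_iff hN).2 (hs'.symm ▸ hW)).mono hraise)

end Constraints

end SalaryGame

/-- Constructive part of the SNE existence theorem in the centralized project salary model:
if `Nstar` is the agent set of the cheapest feasible coalition (the winner under the
minimal-salary profile) and `sstar` is a maximal solution of the constraint system
(1) ∑_{i∈N*} s_i ≤ v,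
(2) ∑_{i∈N*∖A} s_i ≤ ∑_{i∈A∖N*} m_i for every feasible agent set A ≠ N* with N* ≺ A,
(3) ∑_{i∈N*∖A} s_i < ∑_{i∈A∖N*} m_i for every feasible agent set A ≠ N* with A ≺ N*,
then the profile in which agents of `Nstar` ask `sstar` and all others ask their minimal
salaries is a Strong Nash Equilibrium in which all agents of `Nstar` get positive payoffs. -/
theorem stmt19
    {α : Type} [Fintype α] [DecidableEq α]
    (m : α → ℕ) (hm : ∀ i, 0 < m i) (v : ℕ)
    (F : Finset α → Prop)
    (prec : Finset α → Finset α → Prop)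
    (hprec : IsStrictTotalOrder (Finset α) prec)
    (winner : (α → ℕ) → Finset α → Prop)
    (hwinner : ∀ s W, winner s W ↔
      (F W ∧ ∑ i ∈ W, s i ≤ v) ∧
      ∀ A, A ≠ W → F A → ∑ i ∈ A, s i ≤ v →
        (∑ i ∈ W, s i < ∑ i ∈ A, s i ∨
         (∑ i ∈ W, s i = ∑ i ∈ A, s i ∧ prec W A)))
    (payoff : (α → ℕ) → α → ℕ)
    (hpayoff : ∀ s i, payoff s i = if ∃ W, winner s W ∧ i ∈ W then s i else 0)
    (valid : (α → ℕ) → Prop)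
    (hvalid : ∀ s, valid s ↔ ∀ i, m i ≤ s i)
    (SNE : (α → ℕ) → Prop)
    (hSNE : ∀ s, SNE s ↔ valid s ∧ ¬ ∃ (D : Finset α) (s' : α → ℕ),
      D.Nonempty ∧ valid s' ∧ (∀ i ∉ D, s' i = s i) ∧
      ∀ i ∈ D, payoff s i < payoff s' i)
    (Nstar : Finset α) (hNstar : winner m Nstar)
    (Sat : (α → ℕ) → Prop)
    (hSat : ∀ s, Sat s ↔
      (∑ i ∈ Nstar, s i ≤ v) ∧
      (∀ A : Finset α, F A → A ≠ Nstar → prec Nstar A →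
        ∑ i ∈ Nstar \ A, s i ≤ ∑ i ∈ A \ Nstar, m i) ∧
      (∀ A : Finset α, F A → A ≠ Nstar → prec A Nstar →
        ∑ i ∈ Nstar \ A, s i < ∑ i ∈ A \ Nstar, m i))
    (sstar : α → ℕ) (hge : ∀ i, m i ≤ sstar i)
    (hsat : Sat sstar)
    (hmax : ∀ i ∈ Nstar, ¬ Sat (Function.update sstar i (sstar i + 1)))
    (σ : α → ℕ) (hσ : σ = fun i => if i ∈ Nstar then sstar i else m i) :
    SNE σ ∧ ∀ i ∈ Nstar, payoff σ i = sstar i ∧ 0 < payoff σ i := by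
  have := hprec
  obtain rfl : winner = SalaryGame.IsCheapest F prec v :=
    funext₂ fun s W => propext (hwinner s W)
  -- `congr` reconciles the `Decidable` instances of the two `if`s (one goes through `Fintype`).
  obtain rfl : payoff = SalaryGame.payoff F prec v :=
    funext₂ fun s i => (hpayoff s i).trans (by unfold SalaryGame.payoff; congr)
  obtain rfl : Sat = SalaryGame.SalaryConstraints F prec v m Nstar :=
    funext fun s => propext (hSat s)
  obtain rfl : σ = Nstar.piecewise sstar m := hσ
  have hN := (SalaryGame.salaryConstraints_iff hNstar.1.1).1 hsat
  have hpaid : ∀ i ∈ Nstar, SalaryGame.payoff F prec v (Nstar.piecewise sstar m) i = sstar i :=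
    fun i hi => (SalaryGame.payoff_of_mem hN hi).trans (piecewise_eq_of_mem _ _ _ hi)
  refine ⟨(hSNE _).2 ⟨(hvalid _).2 fun i => ?_, fun ⟨D, s', hD, hs', hfix, hgain⟩ =>
      SalaryGame.no_profitable_deviation hNstar.1.1 hsat hmax hD ((hvalid s').1 hs') hfix hgain⟩,
    fun i hi => ⟨hpaid i hi, hpaid i hi ▸ (hm i).trans_le (hge i)⟩⟩
  by_cases hi : i ∈ Nstar
  · exact (piecewise_eq_of_mem _ _ _ hi).symm ▸ hge i
  · exact (piecewise_eq_of_notMem _ _ _ hi).ge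
end
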